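/- arXiv:1704.08820 — 5 statements merged into one kernel-verified Lean document; each statement's English description precedes it below -/
import Mathlib

section
/- In the GTDPL operational semantics, the matching relation is deterministic: if (A, u) ⇒ r₁ with derivation D₁ and (A, u) ⇒ r₂ with derivation D₂, then D₁ = D₂ and r₁ = r₂. -/
/-- GTDPL rule right-hand sides: `ε`, failure `f`, a terminal symbol, or a
ternary expression `B[C,D]`. -/
inductive GExpr (σ ν : Type) : Type
  | eps : GExpr σ ν
  | fail : GExpr σ ν
  | sym (a : σ) : GExpr σ ν
  | tern (B C D : ν) : GExpr σ ν

/-- Derivations of the GTDPL matching relation `(A, u) ⇒ r` for a program with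
rule relation `R` (a rule `A ← g` is represented by `R A g`).  The result `r` is
`some v` for success with remaining suffix `v`, and `none` for failure `f`. -/
inductive Deriv {σ ν : Type} (R : ν → GExpr σ ν → Prop) :
    ν → List σ → Option (List σ) → Type
  | eps {A : ν} {u : List σ} : R A .eps → Deriv R A u (some u)
  | fail {A : ν} {u : List σ} : R A .fail → Deriv R A u none
  | symOk {A : ν} {a : σ} {u : List σ} : R A (.sym a) → Deriv R A (a :: u) (some u)
  | symFail {A : ν} {a : σ} {u : List σ} :
      R A (.sym a) → (∀ u', u ≠ a :: u') → Deriv R A u none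
  | ternSucc {A B C D : ν} {u v : List σ} {r : Option (List σ)} :
      R A (.tern B C D) → Deriv R B u (some v) → Deriv R C v r → Deriv R A u r
  | ternFail {A B C D : ν} {u : List σ} {r : Option (List σ)} :
      R A (.tern B C D) → Deriv R B u none → Deriv R D u r → Deriv R A u r

/-- Determinacy of the GTDPL matching relation: for a program in which every
nonterminal has at most one rule, if `(A,u) ⇒ r₁` by derivation `D₁` and
`(A,u) ⇒ r₂` by derivation `D₂`, then `r₁ = r₂` and `D₁ = D₂`. -/
theorem gtdpl_determinacy {σ ν : Type} (R : ν → GExpr σ ν → Prop)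
    (hR : ∀ A g g', R A g → R A g' → g = g')
    {A : ν} {u : List σ} {r₁ r₂ : Option (List σ)}
    (D₁ : Deriv R A u r₁) (D₂ : Deriv R A u r₂) :
    r₁ = r₂ ∧ HEq D₁ D₂ := by
  induction D₁ generalizing r₂ with
  | eps h =>
    cases D₂ with
    | eps h' => exact ⟨rfl, HEq.rfl⟩
    | fail h' => exact absurd (hR _ _ _ h h') (by simp)
    | symOk h' => exact absurd (hR _ _ _ h h') (by simp)
    | symFail h' _ => exact absurd (hR _ _ _ h h') (by simp)
    | ternSucc h' _ _ => exact absurd (hR _ _ _ h h') (by simp)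
    | ternFail h' _ _ => exact absurd (hR _ _ _ h h') (by simp)
  | fail h =>
    cases D₂ with
    | fail h' => exact ⟨rfl, HEq.rfl⟩
    | eps h' => exact absurd (hR _ _ _ h h') (by simp)
    | symOk h' => exact absurd (hR _ _ _ h h') (by simp)
    | symFail h' _ => exact absurd (hR _ _ _ h h') (by simp)
    | ternSucc h' _ _ => exact absurd (hR _ _ _ h h') (by simp)
    | ternFail h' _ _ => exact absurd (hR _ _ _ h h') (by simp)
  | symOk h =>
    cases D₂ with
    | symOk h' => exact ⟨rfl, HEq.rfl⟩
    | eps h' => exact absurd (hR _ _ _ h h') (by simp)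
    | fail h' => exact absurd (hR _ _ _ h h') (by simp)
    | symFail h' hne =>
      obtain rfl : _ = _ := (GExpr.sym.inj (hR _ _ _ h h'))
      exact absurd rfl (hne _)
    | ternSucc h' _ _ => exact absurd (hR _ _ _ h h') (by simp)
    | ternFail h' _ _ => exact absurd (hR _ _ _ h h') (by simp)
  | symFail h hne =>
    cases D₂ with
    | symFail h' hne' =>
      obtain rfl : _ = _ := (GExpr.sym.inj (hR _ _ _ h h'))
      exact ⟨rfl, HEq.rfl⟩
    | eps h' => exact absurd (hR _ _ _ h h') (by simp)
    | fail h' => exact absurd (hR _ _ _ h h') (by simp)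
    | symOk h' =>
      obtain rfl : _ = _ := (GExpr.sym.inj (hR _ _ _ h h'))
      exact absurd rfl (hne _)
    | ternSucc h' _ _ => exact absurd (hR _ _ _ h h') (by simp)
    | ternFail h' _ _ => exact absurd (hR _ _ _ h h') (by simp)
  | ternSucc h dB dC ihB ihC =>
    cases D₂ with
    | eps h' => exact absurd (hR _ _ _ h h') (by simp)
    | fail h' => exact absurd (hR _ _ _ h h') (by simp)
    | symOk h' => exact absurd (hR _ _ _ h h') (by simp)
    | symFail h' _ => exact absurd (hR _ _ _ h h') (by simp)
    | ternSucc h' dB' dC' =>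
      obtain ⟨rfl, rfl, rfl⟩ := GExpr.tern.inj (hR _ _ _ h h')
      obtain ⟨hv, hB⟩ := ihB dB'
      obtain rfl := Option.some.inj hv
      obtain rfl := eq_of_heq hB
      obtain ⟨hr, hC⟩ := ihC dC'
      subst hr
      obtain rfl := eq_of_heq hC
      exact ⟨rfl, HEq.rfl⟩
    | ternFail h' dB' dD' =>
      obtain ⟨rfl, rfl, rfl⟩ := GExpr.tern.inj (hR _ _ _ h h')
      exact absurd (ihB dB').1 (by simp)
  | ternFail h dB dD ihB ihD =>
    cases D₂ with
    | eps h' => exact absurd (hR _ _ _ h h') (by simp)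
    | fail h' => exact absurd (hR _ _ _ h h') (by simp)
    | symOk h' => exact absurd (hR _ _ _ h h') (by simp)
    | symFail h' _ => exact absurd (hR _ _ _ h h') (by simp)
    | ternSucc h' dB' dC' =>
      obtain ⟨rfl, rfl, rfl⟩ := GExpr.tern.inj (hR _ _ _ h h')
      exact absurd (ihB dB').1 (by simp)
    | ternFail h' dB' dD' =>
      obtain ⟨rfl, rfl, rfl⟩ := GExpr.tern.inj (hR _ _ _ h h')
      obtain ⟨_, hB⟩ := ihB dB'
      obtain rfl := eq_of_heq hB
      obtain ⟨hr, hD⟩ := ihD dD'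
      subst hr
      obtain rfl := eq_of_heq hD
      exact ⟨rfl, HEq.rfl⟩
end

section
/- Preservation of consistency under single-entry update: if F is a monotone endofunction on tables and T ⊑ F(T), then for every index (p,q), the single-entry update F_{pq}(T) (which sets entry (p,q) to F(T)_{pq} and leaves the rest unchanged) satisfies F_{pq}(T) ⊑ F(F_{pq}(T)). -/
/-- Preservation of consistency under a single-entry update: tables are
functions from an index set `ι` to a partially ordered set `β` with bottom,
compared pointwise.  If `F` is a monotone endofunction on tables and `T ⊑ F(T)`,
then for every index `pq`, the single-entry update `F_{pq}(T)` — which sets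
entry `pq` to `F(T)_{pq}` and leaves all other entries unchanged — satisfies
`F_{pq}(T) ⊑ F(F_{pq}(T))`. -/
theorem update_preserves_consistency {ι β : Type*} [PartialOrder β] [OrderBot β]
    [DecidableEq ι]
    (F : (ι → β) → (ι → β)) (hF : Monotone F)
    (T : ι → β) (hT : T ≤ F T) (pq : ι) :
    Function.update T pq (F T pq) ≤ F (Function.update T pq (F T pq)) := by
  have hTT' : T ≤ Function.update T pq (F T pq) := by
    intro i
    rcases eq_or_ne i pq with rfl | h
    · simpa using hT i
    · simp [Function.update_of_ne h]
  intro i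
  rcases eq_or_ne i pq with rfl | h
  · simpa using hF hTT' i
  · calc Function.update T pq (F T pq) i = T i := Function.update_of_ne h _ _
      _ ≤ F T i := hT i
      _ ≤ _ := hF hTT' i
end

section
/- For any regular expression E, the bit-coding function code : T(E) → {0,1}* is injective on parse trees of E; equivalently, there is a decoding function decode_E with decode_E(code(V)) = V for all V ∈ T(E). -/
open RegularExpression in
/-- Parse trees for regular expressions read as types: `T(1) = {()}`,
`T(a) = {a}`, `T(E₁E₂)` is the product, `T(E₁+E₂)` the tagged sum, and
`T(E₁*)` the finite lists over `T(E₁)` (and `T(0) = ∅`: no constructor). -/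
inductive PTree {σ : Type} : RegularExpression σ → Type
  | unit : PTree epsilon
  | chr (a : σ) : PTree (char a)
  | pair {e₁ e₂ : RegularExpression σ} : PTree e₁ → PTree e₂ → PTree (comp e₁ e₂)
  | inl {e₁ e₂ : RegularExpression σ} : PTree e₁ → PTree (plus e₁ e₂)
  | inr {e₁ e₂ : RegularExpression σ} : PTree e₂ → PTree (plus e₁ e₂)
  | nil {e : RegularExpression σ} : PTree (star e)
  | cons {e : RegularExpression σ} : PTree e → PTree (star e) → PTree (star e)

/-- Flattening of a parse tree: erase all structure, returning the sequence of
alphabet symbols at the leaves. -/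
def PTree.flat {σ : Type} : ∀ {e : RegularExpression σ}, PTree e → List σ
  | _, .unit => []
  | _, .chr a => [a]
  | _, .pair t₁ t₂ => t₁.flat ++ t₂.flat
  | _, .inl t => t.flat
  | _, .inr t => t.flat
  | _, .nil => []
  | _, .cons t ts => t.flat ++ ts.flat

/-- The bit-coding of parse trees: `code(()) = code(a) = ε`,
`code((v₁,v₂)) = code(v₁)·code(v₂)`, `code(inl v) = 0·code(v)`,
`code(inr v) = 1·code(v)`, and
`code([v₁,...,vₙ]) = 0·code(v₁)·0·code(v₂)·...·0·code(vₙ)·1`. -/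
def PTree.code {σ : Type} : ∀ {e : RegularExpression σ}, PTree e → List Bool
  | _, .unit => []
  | _, .chr _ => []
  | _, .pair t₁ t₂ => t₁.code ++ t₂.code
  | _, .inl t => false :: t.code
  | _, .inr t => true :: t.code
  | _, .nil => [true]
  | _, .cons t ts => false :: (t.code ++ ts.code)


theorem PTree.code_inj_aux {σ : Type} : ∀ {E : RegularExpression σ}
    (V V' : PTree E) (l l' : List Bool),
    V.code ++ l = V'.code ++ l' → V = V' ∧ l = l' := by
  intro E V
  induction V with
  | unit => intro V' l l' h; cases V'; simpa [PTree.code] using h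
  | chr a => intro V' l l' h; cases V'; simpa [PTree.code] using h
  | pair t₁ t₂ ih₁ ih₂ =>
    intro V' l l' h
    cases V' with
    | pair s₁ s₂ =>
      simp only [PTree.code, List.append_assoc] at h
      obtain ⟨rfl, h2⟩ := ih₁ _ _ _ h
      obtain ⟨rfl, rfl⟩ := ih₂ _ _ _ h2
      exact ⟨rfl, rfl⟩
  | inl t ih =>
    intro V' l l' h
    cases V' with
    | inl s =>
      simp only [PTree.code, List.cons_append, List.cons.injEq] at h
      obtain ⟨rfl, rfl⟩ := ih _ _ _ h.2
      exact ⟨rfl, rfl⟩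
    | inr s => simp [PTree.code] at h
  | inr t ih =>
    intro V' l l' h
    cases V' with
    | inl s => simp [PTree.code] at h
    | inr s =>
      simp only [PTree.code, List.cons_append, List.cons.injEq] at h
      obtain ⟨rfl, rfl⟩ := ih _ _ _ h.2
      exact ⟨rfl, rfl⟩
  | nil =>
    intro V' l l' h
    cases V' with
    | nil => simpa [PTree.code] using h
    | cons s ss => simp [PTree.code] at h
  | cons t ts ih iht =>
    intro V' l l' h
    cases V' with
    | nil => simp [PTree.code] at h
    | cons s ss =>
      simp only [PTree.code, List.cons_append, List.cons.injEq, List.append_assoc] at h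
      obtain ⟨rfl, h2⟩ := ih _ _ _ h.2
      obtain ⟨rfl, rfl⟩ := iht _ _ _ h2
      exact ⟨rfl, rfl⟩

/-- For any regular expression `E`, bit-coding is injective on the parse trees
of `E` (equivalently, there is a decoding function `decode_E` with
`decode_E(code(V)) = V` for all `V ∈ T(E)`). -/
theorem code_injective {σ : Type} (E : RegularExpression σ) :
    ∀ V V' : PTree E, V.code = V'.code → V = V' := by
  intro V V' h
  have := PTree.code_inj_aux V V' [] [] (by simpa using h)
  exact this.1
end

section
/- For all regular expressions E and parse trees V, V' ∈ T(E), the greedy (structural) order agrees with the lexicographic order on bit-codes: V ⋖ V' if and only if code(V) ≺ code(V'). -/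
/-- The lexicographic order `≺` on bit sequences: `ε ≺ d` for `d ≠ ε`, and
`b·d ≺ b'·d'` if `b < b'` or (`b = b'` and `d ≺ d'`), with `false < true`. -/
inductive BitLex : List Bool → List Bool → Prop
  | nil {b : Bool} {d : List Bool} : BitLex [] (b :: d)
  | head {d d' : List Bool} : BitLex (false :: d) (true :: d')
  | tail {b : Bool} {d d' : List Bool} : BitLex d d' → BitLex (b :: d) (b :: d')

/-- The greedy (structural) order `⋖` on parse trees of a regular expression. -/
inductive GLt {σ : Type} : ∀ {e : RegularExpression σ}, PTree e → PTree e → Prop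
  | pairL {e₁ e₂ : RegularExpression σ} {v₁ v₁' : PTree e₁} {v₂ v₂' : PTree e₂} :
      GLt v₁ v₁' → GLt (.pair v₁ v₂) (.pair v₁' v₂')
  | pairR {e₁ e₂ : RegularExpression σ} {v₁ : PTree e₁} {v₂ v₂' : PTree e₂} :
      GLt v₂ v₂' → GLt (.pair v₁ v₂) (.pair v₁ v₂')
  | inl {e₁ e₂ : RegularExpression σ} {v v' : PTree e₁} :
      GLt v v' → GLt (e := .plus e₁ e₂) (.inl v) (.inl v')
  | inr {e₁ e₂ : RegularExpression σ} {v v' : PTree e₂} :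
      GLt v v' → GLt (e := .plus e₁ e₂) (.inr v) (.inr v')
  | inlr {e₁ e₂ : RegularExpression σ} {v : PTree e₁} {v' : PTree e₂} :
      GLt (e := .plus e₁ e₂) (.inl v) (.inr v')
  | consNil {e : RegularExpression σ} {v : PTree e} {vs : PTree (.star e)} :
      GLt (.cons v vs) .nil
  | consHead {e : RegularExpression σ} {v v' : PTree e} {vs vs' : PTree (.star e)} :
      GLt v v' → GLt (.cons v vs) (.cons v' vs')
  | consTail {e : RegularExpression σ} {v : PTree e} {vs vs' : PTree (.star e)} :
      GLt vs vs' → GLt (.cons v vs) (.cons v vs')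

theorem BitLex.irrefl' : ∀ {d : List Bool}, BitLex d d → False
  | _ :: _, .tail h => BitLex.irrefl' h

theorem BitLex.asymm' : ∀ {a b : List Bool}, BitLex a b → BitLex b a → False
  | _, _, .tail h, .tail h' => BitLex.asymm' h h'

/-- Codes of parse trees of a common type are prefix-free (unique decoding). -/
theorem PTree.code_pf {σ : Type} : ∀ {e : RegularExpression σ} (t t' : PTree e)
    (x y : List Bool), t.code ++ x = t'.code ++ y → t = t'
  | _, .unit, .unit, _, _, _ => rfl
  | _, .chr _, .chr _, _, _, _ => rfl
  | _, .pair a b, .pair a' b', x, y, h => by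
      simp only [PTree.code, List.append_assoc] at h
      obtain rfl := PTree.code_pf a a' _ _ h
      obtain rfl := PTree.code_pf b b' _ _ (List.append_cancel_left h)
      rfl
  | _, .inl t, .inl t', x, y, h => by
      simp only [PTree.code, List.cons_append] at h
      obtain rfl := PTree.code_pf t t' _ _ (List.cons.injEq .. ▸ h).2
      rfl
  | _, .inr t, .inr t', x, y, h => by
      simp only [PTree.code, List.cons_append] at h
      obtain rfl := PTree.code_pf t t' _ _ (List.cons.injEq .. ▸ h).2
      rfl
  | _, .inl t, .inr t', x, y, h => by
      simp only [PTree.code, List.cons_append, List.cons.injEq] at h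
      exact absurd h.1 (by simp)
  | _, .inr t, .inl t', x, y, h => by
      simp only [PTree.code, List.cons_append, List.cons.injEq] at h
      exact absurd h.1 (by simp)
  | _, .nil, .nil, _, _, _ => rfl
  | _, .nil, .cons _ _, x, y, h => by
      simp only [PTree.code, List.cons_append, List.cons.injEq] at h
      exact absurd h.1 (by simp)
  | _, .cons _ _, .nil, x, y, h => by
      simp only [PTree.code, List.cons_append, List.cons.injEq] at h
      exact absurd h.1 (by simp)
  | _, .cons a b, .cons a' b', x, y, h => by
      simp only [PTree.code, List.cons_append, List.append_assoc,
        List.cons.injEq] at h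
      obtain rfl := PTree.code_pf a a' _ _ h.2
      obtain rfl := PTree.code_pf b b' _ _ (List.append_cancel_left h.2)
      rfl

theorem PTree.code_prefix_eq {σ : Type} {e : RegularExpression σ}
    {t t' : PTree e} (h : t.code <+: t'.code) : t = t' := by
  obtain ⟨y, hy⟩ := h
  exact PTree.code_pf t t' y [] (by simp [hy])

theorem BitLex.append_right {p c d : List Bool} (h : BitLex c d) :
    BitLex (p ++ c) (p ++ d) := by
  induction p with
  | nil => exact h
  | cons b p ih => exact .tail ih

theorem BitLex.append_of_not_prefix : ∀ {a b : List Bool}, BitLex a b →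
    ¬ a <+: b → ∀ x y : List Bool, BitLex (a ++ x) (b ++ y)
  | _, _, .nil, hp, _, _ => absurd (List.nil_prefix) hp
  | _, _, .head, _, _, _ => .head
  | _, _, .tail h, hp, x, y =>
      .tail (BitLex.append_of_not_prefix h
        (fun hd => hp (List.cons_prefix_cons.mpr ⟨rfl, hd⟩)) x y)

theorem GLt.bitLex {σ : Type} {e : RegularExpression σ} {V V' : PTree e}
    (h : GLt V V') : BitLex V.code V'.code := by
  induction h with
  | @pairL _ _ v₁ v₁' v₂ v₂' h ih =>
      refine BitLex.append_of_not_prefix ih (fun hp => ?_) _ _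
      obtain rfl := PTree.code_prefix_eq hp
      exact BitLex.irrefl' ih
  | pairR h ih => exact BitLex.append_right ih
  | inl h ih => exact .tail ih
  | inr h ih => exact .tail ih
  | inlr => exact .head
  | consNil => exact .head
  | @consHead _ v v' vs vs' h ih =>
      refine .tail (BitLex.append_of_not_prefix ih (fun hp => ?_) _ _)
      obtain rfl := PTree.code_prefix_eq hp
      exact BitLex.irrefl' ih
  | consTail h ih => exact .tail (BitLex.append_right ih)

theorem GLt.trichotomy {σ : Type} : ∀ {e : RegularExpression σ}
    (t t' : PTree e), GLt t t' ∨ t = t' ∨ GLt t' t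
  | _, .unit, .unit => .inr (.inl rfl)
  | _, .chr _, .chr _ => .inr (.inl rfl)
  | _, .pair a b, .pair a' b' => by
      rcases GLt.trichotomy a a' with h | rfl | h
      · exact .inl (.pairL h)
      · rcases GLt.trichotomy b b' with h | rfl | h
        · exact .inl (.pairR h)
        · exact .inr (.inl rfl)
        · exact .inr (.inr (.pairR h))
      · exact .inr (.inr (.pairL h))
  | _, .inl t, .inl t' => by
      rcases GLt.trichotomy t t' with h | rfl | h
      · exact .inl (.inl h)
      · exact .inr (.inl rfl)
      · exact .inr (.inr (.inl h))
  | _, .inr t, .inr t' => by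
      rcases GLt.trichotomy t t' with h | rfl | h
      · exact .inl (.inr h)
      · exact .inr (.inl rfl)
      · exact .inr (.inr (.inr h))
  | _, .inl _, .inr _ => .inl .inlr
  | _, .inr _, .inl _ => .inr (.inr .inlr)
  | _, .nil, .nil => .inr (.inl rfl)
  | _, .nil, .cons _ _ => .inr (.inr .consNil)
  | _, .cons _ _, .nil => .inl .consNil
  | _, .cons a b, .cons a' b' => by
      rcases GLt.trichotomy a a' with h | rfl | h
      · exact .inl (.consHead h)
      · rcases GLt.trichotomy b b' with h | rfl | h
        · exact .inl (.consTail h)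
        · exact .inr (.inl rfl)
        · exact .inr (.inr (.consTail h))
      · exact .inr (.inr (.consHead h))

/-- For all regular expressions `E` and parse trees `V, V' ∈ T(E)`, the greedy
(structural) order agrees with the lexicographic order on bit-codes:
`V ⋖ V'` if and only if `code(V) ≺ code(V')`. -/
theorem glt_iff_bitLex_code {σ : Type} (E : RegularExpression σ)
    (V V' : PTree E) : GLt V V' ↔ BitLex V.code V'.code := by
  constructor
  · exact GLt.bitLex
  · intro h
    rcases GLt.trichotomy V V' with h1 | rfl | h1
    · exact h1
    · exact absurd h BitLex.irrefl'
    · exact (BitLex.asymm' h h1.bitLex).elim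
end

section
/- Path extension preserves lexicographic output order in an augmented NFA: let s, t₁, t₂, t be states and p₁, p₂, q₁, q₂ paths with s →^{p₁} t₁, s →^{p₂} t₂, t₁ →^{q₁} t, t₂ →^{q₂} t, where p₁ is not a prefix of p₂. If write(p₁) ≺ write(p₂) in the lexicographic order on output bit sequences, then write(p₁q₁) ≺ write(p₂q₂). -/
/-- Transition labels of an augmented NFA: an input symbol from `Σ`, an output
bit (`0̂` or `1̂`), or a log bit (`0̄` or `1̄`). -/
inductive ALabel (σ : Type) : Type
  | inp (a : σ) : ALabel σ
  | out (b : Bool) : ALabel σ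
  | log (b : Bool) : ALabel σ

/-- The output bit (if any) of a single label. -/
def ALabel.writeBit {σ : Type} : ALabel σ → Option Bool
  | .out b => some b
  | _ => none

/-- `write(p)`: the subsequence of output-bit labels along a path, as a bit string. -/
def pathWrite {σ : Type} (p : List (ALabel σ)) : List Bool :=
  p.filterMap ALabel.writeBit

/-- `PathTo Δ q p q'`: there is a path labeled `p` from `q` to `q'` in the
automaton with transition relation `Δ`. -/
inductive PathTo {σ Q : Type} (Δ : Q → ALabel σ → Q → Prop) :
    Q → List (ALabel σ) → Q → Prop
  | nil (q : Q) : PathTo Δ q [] q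
  | cons {q q' q'' : Q} {ℓ : ALabel σ} {p : List (ALabel σ)} :
      Δ q ℓ q' → PathTo Δ q' p q'' → PathTo Δ q (ℓ :: p) q''

lemma not_bitLex_nil {x : List Bool} : ¬ BitLex x [] := fun h => by cases h

lemma bitLex_cons_cons {b : Bool} {x y : List Bool} (h : BitLex (b :: x) (b :: y)) :
    BitLex x y := by
  cases h with
  | tail h => exact h

lemma pathWrite_aux {σ Q : Type} (Δ : Q → ALabel σ → Q → Prop)
    (hwf : ∀ (q : Q) (ℓ₁ : ALabel σ) (q₁ : Q) (ℓ₂ : ALabel σ) (q₂ : Q),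
      Δ q ℓ₁ q₁ → Δ q ℓ₂ q₂ → (ℓ₁, q₁) ≠ (ℓ₂, q₂) →
      (ℓ₁ = .out false ∧ ℓ₂ = .out true) ∨ (ℓ₁ = .out true ∧ ℓ₂ = .out false)) :
    ∀ (p₁ p₂ : List (ALabel σ)) (s t₁ t₂ : Q) (w₁ w₂ : List Bool),
      PathTo Δ s p₁ t₁ → PathTo Δ s p₂ t₂ → ¬ p₁ <+: p₂ →
      BitLex (pathWrite p₁) (pathWrite p₂) →
      BitLex (pathWrite p₁ ++ w₁) (pathWrite p₂ ++ w₂) := by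
  intro p₁
  induction p₁ with
  | nil =>
    intro p₂ s t₁ t₂ w₁ w₂ _ _ hpre _
    exact absurd (List.nil_prefix) hpre
  | cons ℓ₁ p₁ ih =>
    intro p₂ s t₁ t₂ w₁ w₂ h₁ h₂ hpre hlt
    cases p₂ with
    | nil =>
      simp only [pathWrite, List.filterMap_nil] at hlt
      exact absurd hlt not_bitLex_nil
    | cons ℓ₂ p₂ =>
      cases h₁ with
      | cons hd₁ tl₁ =>
        cases h₂ with
        | cons hd₂ tl₂ =>
          rename_i r₁ r₂
          by_cases heq : ((ℓ₁ : ALabel σ), r₁) = (ℓ₂, r₂)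
          · obtain ⟨hℓ, hr⟩ := Prod.mk.injEq .. ▸ heq
            subst hℓ; subst hr
            have hpre' : ¬ p₁ <+: p₂ := fun h => hpre (List.cons_prefix_cons.mpr ⟨rfl, h⟩)
            cases ℓ₁ with
            | inp a =>
              simp only [pathWrite, List.filterMap_cons, ALabel.writeBit] at hlt ⊢
              exact ih p₂ _ _ _ w₁ w₂ tl₁ tl₂ hpre' hlt
            | log b =>
              simp only [pathWrite, List.filterMap_cons, ALabel.writeBit] at hlt ⊢
              exact ih p₂ _ _ _ w₁ w₂ tl₁ tl₂ hpre' hlt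
            | out b =>
              simp only [pathWrite, List.filterMap_cons, ALabel.writeBit] at hlt ⊢
              exact BitLex.tail (ih p₂ _ _ _ w₁ w₂ tl₁ tl₂ hpre' (bitLex_cons_cons hlt))
          · rcases hwf s ℓ₁ r₁ ℓ₂ r₂ hd₁ hd₂ heq with ⟨e₁, e₂⟩ | ⟨e₁, e₂⟩
            · subst e₁; subst e₂
              simp only [pathWrite, List.filterMap_cons, ALabel.writeBit]
              exact BitLex.head
            · subst e₁; subst e₂
              simp only [pathWrite, List.filterMap_cons, ALabel.writeBit] at hlt
              cases hlt

/-- Path extension preserves lexicographic output order in a (well-formed)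
augmented NFA.  Well-formedness (`hwf`) captures the structure of aNFAs built
from regular expressions: whenever a state has two distinct outgoing
transitions, they form a `0̂`/`1̂` output pair (choice state); in particular each
state's transitions are label-deterministic.  If `s →^{p₁} t₁`, `s →^{p₂} t₂`,
`t₁ →^{q₁} t`, `t₂ →^{q₂} t`, `p₁` is not a prefix of `p₂`, and
`write(p₁) ≺ write(p₂)`, then `write(p₁q₁) ≺ write(p₂q₂)`. -/
theorem pathWrite_extension_preserves_bitLex {σ Q : Type}
    (Δ : Q → ALabel σ → Q → Prop)
    (hwf : ∀ (q : Q) (ℓ₁ : ALabel σ) (q₁ : Q) (ℓ₂ : ALabel σ) (q₂ : Q),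
      Δ q ℓ₁ q₁ → Δ q ℓ₂ q₂ → (ℓ₁, q₁) ≠ (ℓ₂, q₂) →
      (ℓ₁ = .out false ∧ ℓ₂ = .out true) ∨ (ℓ₁ = .out true ∧ ℓ₂ = .out false))
    (s t₁ t₂ t : Q) (p₁ p₂ q₁ q₂ : List (ALabel σ))
    (h₁ : PathTo Δ s p₁ t₁) (h₂ : PathTo Δ s p₂ t₂)
    (h₃ : PathTo Δ t₁ q₁ t) (h₄ : PathTo Δ t₂ q₂ t)
    (hpre : ¬ p₁ <+: p₂)
    (hlt : BitLex (pathWrite p₁) (pathWrite p₂)) :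
    BitLex (pathWrite (p₁ ++ q₁)) (pathWrite (p₂ ++ q₂)) := by
  have := pathWrite_aux Δ hwf p₁ p₂ s t₁ t₂ (pathWrite q₁) (pathWrite q₂) h₁ h₂ hpre hlt
  simpa [pathWrite, List.filterMap_append] using this
end
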